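/- Let K be the normal closure of the commutator [a,b] in the Grigorchuk group G. For each k in K, let k̄ be the binary tree automorphism determined recursively by k̄=(k,k̄) (inactive at the root, with section k at vertex 0 and section k̄ at vertex 1). Then every k̄ belongs to the closure of G in Aut(T), and the set K̄={k̄ : k∈K} is a subgroup of the closure of G canonically isomorphic to K whose intersection with G is trivial. -/

import Mathlib

/-!
We model the group `Aut(T)` of automorphisms of the binary rooted tree via portraits:
an automorphism is uniquely determined by the function `List Bool → Bool` recording,
for every vertex `u` (a finite binary word, `false = 0`, `true = 1`), whether the
automorphism is active (i.e. swaps the two subtrees) at `u`.  Under this identification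
`α_u(g) = g u`, the section of `g` at `u` is `fun v => g (u ++ v)`, and the group
operation corresponds to composition of tree automorphisms.
-/

/-- Automorphisms of the binary rooted tree, encoded by their portraits. -/
def AutT : Type := List Bool → Bool

namespace AutT

/-- The section of a tree automorphism at a first-level vertex. -/
def sec (g : AutT) (x : Bool) : AutT := fun u => g (x :: u)

/-- The section of a tree automorphism at an arbitrary vertex `u`. -/
def secAt (g : AutT) (u : List Bool) : AutT := fun v => g (u ++ v)

/-- The activity (decoration of the portrait) of `g` at the vertex `u`:
`α_u(g) = 1` iff `g` is active at `u`. -/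
def alpha (g : AutT) (u : List Bool) : Bool := g u

/-- The action of a tree automorphism on the vertices of the tree. -/
def act : AutT → List Bool → List Bool
  | _, [] => []
  | g, x :: u => (xor (g []) x) :: act (sec g x) u

/-- Auxiliary function defining the product of two tree automorphisms
(`g * h` acts as `g` followed by `h`). -/
def mulAux : List Bool → AutT → AutT → Bool
  | [], g, h => xor (g []) (h [])
  | x :: u, g, h => mulAux u (sec g x) (sec h (xor x (g [])))

instance : Mul AutT := ⟨fun g h u => mulAux u g h⟩

/-- Auxiliary function defining the inverse of a tree automorphism. -/
def invAux : List Bool → AutT → Bool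
  | [], g => g []
  | x :: u, g => invAux u (sec g (xor x (g [])))

instance : One AutT := ⟨fun _ => false⟩
instance : Inv AutT := ⟨fun g u => invAux u g⟩

lemma one_apply (u : List Bool) : (1 : AutT) u = false := rfl

lemma mul_apply_nil (g h : AutT) : (g * h) [] = xor (g []) (h []) := rfl

lemma mul_apply_cons (g h : AutT) (x : Bool) (u : List Bool) :
    (g * h) (x :: u) = (sec g x * sec h (xor x (g []))) u := rfl

lemma sec_mul (g h : AutT) (x : Bool) :
    sec (g * h) x = sec g x * sec h (xor x (g [])) := rfl

lemma sec_one (x : Bool) : sec (1 : AutT) x = 1 := rfl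

lemma inv_apply_nil (g : AutT) : (g⁻¹ : AutT) [] = g [] := rfl

lemma sec_inv (g : AutT) (x : Bool) :
    sec (g⁻¹ : AutT) x = (sec g (xor x (g [])))⁻¹ := rfl

private lemma mul_assoc' (g h k : AutT) : g * h * k = g * (h * k) := by
  funext u
  induction u generalizing g h k with
  | nil => simp [mul_apply_nil, Bool.xor_assoc]
  | cons x u ih =>
      rw [mul_apply_cons, mul_apply_cons, sec_mul, mul_apply_nil, sec_mul, ih,
        Bool.xor_assoc]

private lemma one_mul' (g : AutT) : 1 * g = g := by
  funext u
  induction u generalizing g with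
  | nil => simp [mul_apply_nil, one_apply]
  | cons x u ih => rw [mul_apply_cons, sec_one, one_apply, Bool.xor_false, ih]; rfl

private lemma inv_mul_cancel' (g : AutT) : g⁻¹ * g = 1 := by
  funext u
  induction u generalizing g with
  | nil => simp [mul_apply_nil, inv_apply_nil, one_apply]
  | cons x u ih =>
      rw [mul_apply_cons, inv_apply_nil, sec_inv, ih]; rfl

instance : Group AutT :=
  Group.ofLeftAxioms mul_assoc' one_mul' inv_mul_cancel'

/-- The generator `a = (1,1)σ` of the Grigorchuk group. -/
def genA : AutT := fun u => decide (u = [])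

/-- The generators `b`, `c`, `d` of the Grigorchuk group, defined simultaneously:
`bcdAux 0 = b = (a, c)`, `bcdAux 1 = c = (a, d)`, `bcdAux 2 = d = (1, b)`. -/
def bcdAux : Fin 3 → List Bool → Bool
  | _, [] => false
  | i, false :: u => if i.val = 2 then false else decide (u = [])
  | i, true :: u => bcdAux (i + 1) u

/-- The generator `b = (a, c)` of the Grigorchuk group. -/
def genB : AutT := bcdAux 0

/-- The generator `c = (a, d)` of the Grigorchuk group. -/
def genC : AutT := bcdAux 1

/-- The generator `d = (1, b)` of the Grigorchuk group. -/
def genD : AutT := bcdAux 2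

/-- The Grigorchuk group, as a subgroup of the group of binary rooted tree
automorphisms. -/
def Grigorchuk : Subgroup AutT := Subgroup.closure {genA, genB, genC, genD}

/-- `β_{xy}(g) = α_{xy}(g) + α_{x ȳ 0}(g) + α_{x ȳ 1}(g)` (mod 2). -/
def beta (g : AutT) (x y : Bool) : Bool :=
  xor (g [x, y]) (xor (g [x, !y, false]) (g [x, !y, true]))

end AutT
namespace AutT

/-- The portrait of a tree automorphism, level by level: the vertices at level `n`
are encoded as functions `Fin n → Bool`. -/
def toLevels (g : AutT) : ∀ n : ℕ, (Fin n → Bool) → Bool := fun _ v => g (List.ofFn v)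

lemma toLevels_injective : Function.Injective toLevels := by
  intro g h hgh
  funext u
  have := congrFun (congrFun hgh u.length) u.get
  simpa [toLevels, List.ofFn_get] using this

/-- The natural metric on the group of binary rooted tree automorphisms:
the distance between two distinct automorphisms `g` and `h` is `2⁻ⁿ`, where `n` is the
largest integer such that `g` and `h` agree on all words of length `n` (equivalently,
the first level at which the portraits of `g` and `h` differ). -/
noncomputable instance : MetricSpace AutT :=
  MetricSpace.induced toLevels toLevels_injective
    (PiNat.metricSpace (E := fun n => (Fin n → Bool) → Bool))

end AutT

namespace AutT

open scoped commutatorElement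

/-- Auxiliary function for `bar`. -/
def barAux : List Bool → AutT → Bool
  | [], _ => false
  | false :: u, k => k u
  | true :: u, k => barAux u k

/-- For a tree automorphism `k`, the automorphism `k̄` determined recursively by
`k̄ = (k, k̄)`. -/
def bar (k : AutT) : AutT := fun u => barAux u k

lemma genA_mem : genA ∈ Grigorchuk :=
  Subgroup.subset_closure (Set.mem_insert _ _)

lemma genB_mem : genB ∈ Grigorchuk :=
  Subgroup.subset_closure (Set.mem_insert_of_mem _ (Set.mem_insert _ _))

lemma commAB_mem : ⁅genA, genB⁆ ∈ Grigorchuk :=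
  Grigorchuk.mul_mem (Grigorchuk.mul_mem (Grigorchuk.mul_mem genA_mem genB_mem)
    (Grigorchuk.inv_mem genA_mem)) (Grigorchuk.inv_mem genB_mem)

/-- `K`, the normal closure of the commutator `⁅a, b⁆` in the Grigorchuk group. -/
def K : Subgroup Grigorchuk :=
  Subgroup.normalClosure {(⟨⁅genA, genB⁆, commAB_mem⟩ : Grigorchuk)}

end AutT

open AutT

/-!
Write `(x, y)` for the automorphism `pair x y`, inactive at the root with sections `x` and `y`.
The heart of the proof is that `K` is branching: `(k₁, k₂) ∈ K` whenever `k₁, k₂ ∈ K`. Indeed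
`(1, ⁅a, b⁆) = ⁅a, b⁆ · c ⁅a, b⁆ c⁻¹`; every `g ∈ G` is the right section of some `(x, g) ∈ G`, so
`{k ∈ G | (1, k) ∈ K}` is normal in `G` and therefore contains `K`; and conjugation by `a` swaps
the two coordinates. Hence the elements `(k, (k, … (k, 1)))` of `K` converge to `k̄ = (k, k̄)`.
As `k̄` is the unique solution of `x = (k, x)`, the map `k ↦ k̄` is an injective homomorphism.
Finally `G` is contracting with nucleus `{1, a, b, c, d}`: the sections of any `g ∈ G` at all
deep enough vertices lie in the nucleus. The section of `k̄` at `1ⁿ` is `k̄` itself, so `k̄ ∈ G`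
forces `k̄` into the nucleus, and the only element there which is inactive at the root and equal
to its own section at `1` is `1`.
-/

open scoped commutatorElement

namespace AutT

def pair (x y : AutT) : AutT
  | [] => false
  | false :: u => x u
  | true :: u => y u

@[simp] lemma sec_pair_false (x y : AutT) : sec (pair x y) false = x := rfl

@[simp] lemma sec_pair_true (x y : AutT) : sec (pair x y) true = y := rfl

lemma ext_sec {g h : AutT} (hnil : g [] = h []) (hsec : ∀ x, sec g x = sec h x) : g = h := by
  funext u
  rcases u with _ | ⟨x, u⟩
  · exact hnil
  · exact congrFun (hsec x) u

lemma pair_one_one : pair 1 1 = 1 := by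
  funext u
  rcases u with _ | ⟨_ | _, _⟩ <;> rfl

lemma pair_mul_pair (x y x' y' : AutT) : pair x y * pair x' y' = pair (x * x') (y * y') := by
  funext u
  rcases u with _ | ⟨_ | _, _⟩ <;> rfl

def pairHom : AutT × AutT →* AutT where
  toFun p := pair p.1 p.2
  map_one' := pair_one_one
  map_mul' p q := (pair_mul_pair p.1 p.2 q.1 q.2).symm

lemma pair_inv (x y : AutT) : (pair x y)⁻¹ = pair x⁻¹ y⁻¹ :=
  (map_inv pairHom (x, y)).symm

/-- The portrait of `f i` at `1ⁿ0u` is that of `p (σⁿ i)` at `u`. -/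
lemma eq_of_forall_eq_pair {ι : Type*} {σ : ι → ι} {p f g : ι → AutT}
    (hf : ∀ i, f i = pair (p i) (f (σ i))) (hg : ∀ i, g i = pair (p i) (g (σ i))) :
    f = g := by
  suffices h : ∀ u i, f i u = g i u from funext fun i => funext fun u => h u i
  intro u
  induction u with
  | nil => intro i; rw [hf, hg]; rfl
  | cons x u ih =>
    intro i
    rw [hf, hg]
    cases x
    · rfl
    · exact ih (σ i)

lemma bar_eq_pair (k : AutT) : bar k = pair k (bar k) := by
  funext u
  rcases u with _ | ⟨_ | _, _⟩ <;> rfl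

lemma eq_bar_of_eq_pair {k x : AutT} (h : x = pair k x) : x = bar k :=
  congrFun (eq_of_forall_eq_pair (σ := id) (p := fun _ : Unit => k) (fun _ => h)
    (fun _ => bar_eq_pair k)) ()

lemma bar_mul (g h : AutT) : bar (g * h) = bar g * bar h :=
  (eq_bar_of_eq_pair ((congrArg₂ (· * ·) (bar_eq_pair g) (bar_eq_pair h)).trans
    (pair_mul_pair _ _ _ _))).symm

lemma bar_one : bar (1 : AutT) = 1 := (eq_bar_of_eq_pair pair_one_one.symm).symm

lemma bar_injective : Function.Injective bar := fun _ _ h => congrArg (sec · false) h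

def barHom : AutT →* AutT := MonoidHom.mk' bar bar_mul

attribute [simp] sec_one

@[simp] lemma genA_nil : genA [] = true := rfl
@[simp] lemma sec_genA (x : Bool) : sec genA x = 1 := rfl
@[simp] lemma sec_genB_false : sec genB false = genA := rfl
@[simp] lemma sec_genB_true : sec genB true = genC := rfl
@[simp] lemma sec_genC_false : sec genC false = genA := rfl
@[simp] lemma sec_genC_true : sec genC true = genD := rfl
@[simp] lemma sec_genD_false : sec genD false = 1 := rfl
@[simp] lemma sec_genD_true : sec genD true = genB := rfl

lemma genC_mem : genC ∈ Grigorchuk := Subgroup.subset_closure (by simp)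
lemma genD_mem : genD ∈ Grigorchuk := Subgroup.subset_closure (by simp)

lemma genA_mul_pair_mul_genA (x y : AutT) : genA * pair x y * genA = pair y x :=
  ext_sec rfl fun b => by cases b <;> simp [sec_mul, mul_apply_nil]

lemma genA_mul_self : genA * genA = 1 := ext_sec rfl fun x => by simp [sec_mul]

def bcd (i : Fin 3) : AutT := bcdAux i

lemma bcd_eq_pair (i : Fin 3) : bcd i = pair (![genA, genA, 1] i) (bcd (i + 1)) := by
  funext u
  rcases u with _ | ⟨_ | _, _⟩
  · rfl
  · fin_cases i <;> rfl
  · rfl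

lemma genB_eq_pair : genB = pair genA genC := bcd_eq_pair 0
lemma genC_eq_pair : genC = pair genA genD := bcd_eq_pair 1
lemma genD_eq_pair : genD = pair 1 genB := bcd_eq_pair 2

lemma bcd_mul_self (i : Fin 3) : bcd i * bcd i = 1 :=
  congrFun (eq_of_forall_eq_pair (σ := (· + 1)) (p := fun _ => 1) (f := fun i => bcd i * bcd i)
    (fun i => by
      rw [bcd_eq_pair i, pair_mul_pair, show ![genA, genA, 1] i * ![genA, genA, 1] i = 1 by
        fin_cases i <;> simp [genA_mul_self]])
    (fun _ => pair_one_one.symm)) i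

lemma bcd_mul_bcd_succ (i : Fin 3) : bcd i * bcd (i + 1) = bcd (i + 2) :=
  congrFun (eq_of_forall_eq_pair (σ := (· + 1)) (p := fun i => ![genA, genA, 1] (i + 2))
    (f := fun i => bcd i * bcd (i + 1)) (g := fun i => bcd (i + 2))
    (fun i => by
      rw [bcd_eq_pair i, bcd_eq_pair (i + 1), pair_mul_pair,
        show ![genA, genA, 1] i * ![genA, genA, 1] (i + 1) = ![genA, genA, 1] (i + 2) by
          fin_cases i <;> simp [genA_mul_self], ← bcd_eq_pair])
    (fun i => by rw [bcd_eq_pair (i + 2), add_right_comm])) i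

lemma genB_mul_self : genB * genB = 1 := bcd_mul_self 0
lemma genC_mul_self : genC * genC = 1 := bcd_mul_self 1
lemma genD_mul_self : genD * genD = 1 := bcd_mul_self 2
lemma genB_mul_genC : genB * genC = genD := bcd_mul_bcd_succ 0
lemma genC_mul_genD : genC * genD = genB := bcd_mul_bcd_succ 1
lemma genD_mul_genB : genD * genB = genC := bcd_mul_bcd_succ 2

lemma genA_inv : genA⁻¹ = genA := inv_eq_of_mul_eq_one_right genA_mul_self
lemma genB_inv : genB⁻¹ = genB := inv_eq_of_mul_eq_one_right genB_mul_self
lemma genC_inv : genC⁻¹ = genC := inv_eq_of_mul_eq_one_right genC_mul_self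
lemma genD_inv : genD⁻¹ = genD := inv_eq_of_mul_eq_one_right genD_mul_self

lemma genC_mul_genB : genC * genB = genD := by
  rw [← genB_inv, ← genC_inv, ← mul_inv_rev, genB_mul_genC, genD_inv]
lemma genD_mul_genC : genD * genC = genB := by
  rw [← genC_inv, ← genD_inv, ← mul_inv_rev, genC_mul_genD, genB_inv]
lemma genB_mul_genD : genB * genD = genC := by
  rw [← genB_inv, ← genD_inv, ← mul_inv_rev, genD_mul_genB, genC_inv]

section Contraction

variable (S : Set AutT)

def SectionsAtLevelIn : ℕ → AutT → Prop
  | 0, g => g ∈ S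
  | n + 1, g => ∀ x, SectionsAtLevelIn n (sec g x)

variable {S}

lemma SectionsAtLevelIn.succ (hsec : ∀ s ∈ S, ∀ x, sec s x ∈ S) :
    ∀ {n : ℕ} {g : AutT}, SectionsAtLevelIn S n g → SectionsAtLevelIn S (n + 1) g
  | 0, g, hg => hsec g hg
  | _ + 1, _, hg => fun x => succ hsec (hg x)

lemma SectionsAtLevelIn.mono (hsec : ∀ s ∈ S, ∀ x, sec s x ∈ S) {m n : ℕ} {g : AutT}
    (hmn : m ≤ n) (hg : SectionsAtLevelIn S m g) : SectionsAtLevelIn S n g := by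
  induction n, hmn using Nat.le_induction with
  | base => exact hg
  | succ n _ ih => exact ih.succ hsec

lemma SectionsAtLevelIn.mul (hmul : ∀ s ∈ S, ∀ t ∈ S, ∀ x, sec (s * t) x ∈ S) :
    ∀ {n : ℕ} {g h : AutT}, SectionsAtLevelIn S n g → SectionsAtLevelIn S n h →
      SectionsAtLevelIn S (n + 1) (g * h)
  | 0, g, h, hg, hh => hmul g hg h hh
  | _ + 1, _, _, hg, hh => fun x => by rw [sec_mul]; exact mul hmul (hg x) (hh _)

lemma SectionsAtLevelIn.inv (hinv : ∀ s ∈ S, s⁻¹ ∈ S) :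
    ∀ {n : ℕ} {g : AutT}, SectionsAtLevelIn S n g → SectionsAtLevelIn S n g⁻¹
  | 0, g, hg => hinv g hg
  | _ + 1, _, hg => fun x => by rw [sec_inv]; exact inv hinv (hg _)

lemma exists_sectionsAtLevelIn_of_mem_closure (hone : 1 ∈ S)
    (hsec : ∀ s ∈ S, ∀ x, sec s x ∈ S) (hmul : ∀ s ∈ S, ∀ t ∈ S, ∀ x, sec (s * t) x ∈ S)
    (hinv : ∀ s ∈ S, s⁻¹ ∈ S) {T : Set AutT} (hT : T ⊆ S) {g : AutT}
    (hg : g ∈ Subgroup.closure T) : ∃ n, SectionsAtLevelIn S n g := by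
  induction hg using Subgroup.closure_induction with
  | mem g hg => exact ⟨0, hT hg⟩
  | one => exact ⟨0, hone⟩
  | mul g h _ _ ihg ihh =>
    obtain ⟨m, hm⟩ := ihg
    obtain ⟨n, hn⟩ := ihh
    exact ⟨max m n + 1, (hm.mono hsec (le_max_left m n)).mul hmul
      (hn.mono hsec (le_max_right m n))⟩
  | inv g _ ih =>
    obtain ⟨n, hn⟩ := ih
    exact ⟨n, hn.inv hinv⟩

lemma SectionsAtLevelIn.bar_mem {k : AutT} :
    ∀ {n : ℕ}, SectionsAtLevelIn S n (bar k) → bar k ∈ S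
  | 0, h => h
  | _ + 1, h => bar_mem (h true)

end Contraction

def nucleus : Set AutT := {1, genA, genB, genC, genD}

lemma sec_mem_nucleus : ∀ s ∈ nucleus, ∀ x, sec s x ∈ nucleus := by
  rintro s (rfl | rfl | rfl | rfl | rfl) (_ | _) <;> simp [nucleus]

lemma sec_mul_mem_nucleus : ∀ s ∈ nucleus, ∀ t ∈ nucleus, ∀ x, sec (s * t) x ∈ nucleus := by
  rintro s (rfl | rfl | rfl | rfl | rfl) t (rfl | rfl | rfl | rfl | rfl) (_ | _) <;>
    simp [nucleus, sec_mul, genA_mul_self, genB_mul_self, genC_mul_self, genD_mul_self,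
      genB_mul_genC, genC_mul_genB, genC_mul_genD, genD_mul_genC, genD_mul_genB, genB_mul_genD]

lemma inv_mem_nucleus : ∀ s ∈ nucleus, s⁻¹ ∈ nucleus := by
  rintro s (rfl | rfl | rfl | rfl | rfl) <;>
    simp [nucleus, genA_inv, genB_inv, genC_inv, genD_inv]

lemma exists_sectionsAtLevelIn_nucleus {g : AutT} (hg : g ∈ Grigorchuk) :
    ∃ n, SectionsAtLevelIn nucleus n g :=
  exists_sectionsAtLevelIn_of_mem_closure (Set.mem_insert 1 _) sec_mem_nucleus
    sec_mul_mem_nucleus inv_mem_nucleus (Set.subset_insert 1 _) hg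

lemma eq_one_of_mem_nucleus {s : AutT} (hs : s ∈ nucleus) (hnil : s [] = false)
    (hsec : sec s true = s) : s = 1 := by
  rcases hs with rfl | rfl | rfl | rfl | rfl
  · rfl
  · exact absurd hnil (by simp)
  all_goals first
    | exact absurd (congrFun hsec [false]) (by decide)
    | exact absurd (congrFun hsec [true, false]) (by decide)

lemma bar_eq_one_of_mem_grigorchuk {k : AutT} (hk : bar k ∈ Grigorchuk) : bar k = 1 := by
  obtain ⟨n, hn⟩ := exists_sectionsAtLevelIn_nucleus hk
  exact eq_one_of_mem_nucleus hn.bar_mem rfl rfl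

lemma mem_closure_of_forall_exists_eqOn {s : Set AutT} {g : AutT}
    (h : ∀ n : ℕ, ∃ x ∈ s, ∀ u : List Bool, u.length < n → x u = g u) : g ∈ closure s := by
  rw [Metric.mem_closure_iff]
  intro ε hε
  obtain ⟨n, hn⟩ := exists_pow_lt_of_lt_one hε (by norm_num : (1 / 2 : ℝ) < 1)
  obtain ⟨x, hxs, hx⟩ := h n
  have hcyl : toLevels x ∈ PiNat.cylinder (toLevels g) n := fun i hi =>
    funext fun v => hx _ (by simpa using hi)
  refine ⟨x, hxs, lt_of_le_of_lt ?_ hn⟩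
  rw [dist_comm]
  exact PiNat.mem_cylinder_iff_dist_le.mp hcyl

lemma exists_pair_mem_grigorchuk {g : AutT} (hg : g ∈ Grigorchuk) :
    ∃ x, pair x g ∈ Grigorchuk := by
  suffices h : Grigorchuk ≤ (Grigorchuk.comap pairHom).map (MonoidHom.snd AutT AutT) by
    obtain ⟨⟨x, _⟩, hx, rfl⟩ := h hg
    exact ⟨x, hx⟩
  refine (Subgroup.closure_le _).mpr ?_
  rintro _ (rfl | rfl | rfl | rfl)
  · refine ⟨(genD, genA), ?_, rfl⟩
    show pair genD genA ∈ Grigorchuk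
    rw [← genA_mul_pair_mul_genA, ← genC_eq_pair]
    exact mul_mem (mul_mem genA_mem genC_mem) genA_mem
  · exact ⟨(1, genB), show pair 1 genB ∈ Grigorchuk from genD_eq_pair ▸ genD_mem, rfl⟩
  · exact ⟨(genA, genC), show pair genA genC ∈ Grigorchuk from genB_eq_pair ▸ genB_mem, rfl⟩
  · exact ⟨(genA, genD), show pair genA genD ∈ Grigorchuk from genC_eq_pair ▸ genC_mem, rfl⟩

def KAut : Subgroup AutT := K.map Grigorchuk.subtype

lemma KAut_le_grigorchuk : KAut ≤ Grigorchuk := by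
  rintro _ ⟨k, _, rfl⟩
  exact k.2

lemma commAB_mem_KAut : ⁅genA, genB⁆ ∈ KAut := ⟨_, Subgroup.subset_normalClosure rfl, rfl⟩

lemma conj_mem_KAut {g k : AutT} (hg : g ∈ Grigorchuk) (hk : k ∈ KAut) :
    g * k * g⁻¹ ∈ KAut := by
  obtain ⟨k, hk, rfl⟩ := hk
  exact ⟨⟨g, hg⟩ * k * ⟨g, hg⟩⁻¹, Subgroup.normalClosure_normal.conj_mem k hk _, rfl⟩

lemma commAB_eq_pair : ⁅genA, genB⁆ = pair (genC * genA) (genA * genC) := by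
  rw [commutatorElement_def, genA_inv, genB_inv, genB_eq_pair, genA_mul_pair_mul_genA,
    pair_mul_pair]

lemma genC_mul_pair_mul_genC_inv (x y : AutT) :
    genC * pair x y * genC⁻¹ = pair (genA * x * genA⁻¹) (genD * y * genD⁻¹) := by
  rw [genC_eq_pair, pair_inv, pair_mul_pair, pair_mul_pair]

lemma pair_one_commAB :
    pair 1 ⁅genA, genB⁆ = ⁅genA, genB⁆ * (genC * ⁅genA, genB⁆ * genC⁻¹) := by
  conv_rhs => rw [commAB_eq_pair, genC_mul_pair_mul_genC_inv, pair_mul_pair]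
  congr 1
  · simp only [genA_inv, mul_assoc, genA_mul_self, mul_one]
    rw [← mul_assoc genA, genA_mul_self, one_mul, genC_mul_self]
  · rw [commutatorElement_def, genA_inv, genB_inv, genD_inv, ← genC_mul_genD]
    simp only [mul_assoc]

lemma pair_one_mem_KAut {k : AutT} (hk : k ∈ KAut) : pair 1 k ∈ KAut := by
  let L : Subgroup Grigorchuk :=
    (KAut.comap (pairHom.comp (MonoidHom.inr AutT AutT))).comap Grigorchuk.subtype
  have hL (g : Grigorchuk) : g ∈ L ↔ pair 1 g ∈ KAut := Iff.rfl
  -- `(1, g k g⁻¹)` is the conjugate of `(1, k)` by any `(x, g) ∈ G`.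
  have : L.Normal := ⟨fun n hn g => (hL _).2 <| by
    obtain ⟨x, hx⟩ := exists_pair_mem_grigorchuk g.2
    have := conj_mem_KAut hx ((hL n).1 hn)
    rwa [pair_inv, pair_mul_pair, pair_mul_pair, mul_one, mul_inv_cancel] at this⟩
  have hKL : K ≤ L := Subgroup.normalClosure_le_normal <| by
    rintro _ rfl
    refine (hL _).2 ?_
    rw [pair_one_commAB]
    exact mul_mem commAB_mem_KAut (conj_mem_KAut genC_mem commAB_mem_KAut)
  obtain ⟨k, hk, rfl⟩ := hk
  exact hKL hk

lemma pair_mem_KAut {x y : AutT} (hx : x ∈ KAut) (hy : y ∈ KAut) : pair x y ∈ KAut := by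
  have hx1 : pair x 1 ∈ KAut := by
    simpa only [genA_inv, genA_mul_pair_mul_genA] using
      conj_mem_KAut genA_mem (pair_one_mem_KAut hx)
  simpa only [pair_mul_pair, mul_one, one_mul] using mul_mem hx1 (pair_one_mem_KAut hy)

lemma iterate_pair_mem_KAut {k : AutT} (hk : k ∈ KAut) (n : ℕ) : (pair k)^[n] 1 ∈ KAut := by
  induction n with
  | zero => exact one_mem _
  | succ n ih => rw [Function.iterate_succ_apply']; exact pair_mem_KAut hk ih

lemma iterate_pair_apply_eq_bar (k : AutT) :
    ∀ {n : ℕ} {u : List Bool}, u.length < n → (pair k)^[n] 1 u = bar k u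
  | 0, _, hu => absurd hu (Nat.not_lt_zero _)
  | n + 1, u, hu => by
    rw [Function.iterate_succ_apply', bar_eq_pair]
    rcases u with _ | ⟨_ | _, u⟩
    · rfl
    · rfl
    · exact iterate_pair_apply_eq_bar k (n := n) (by simpa using hu)

lemma bar_mem_closure_KAut {k : AutT} (hk : k ∈ KAut) : bar k ∈ closure (KAut : Set AutT) :=
  mem_closure_of_forall_exists_eqOn fun n =>
    ⟨_, iterate_pair_mem_KAut hk n, fun _ => iterate_pair_apply_eq_bar k⟩

end AutT

/-- For `K` the normal closure of `⁅a,b⁆` in the Grigorchuk group `G`,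
every `k̄` (`k ∈ K`) lies in the closure of `G`; moreover `K̄ = {k̄ : k ∈ K}` is a
subgroup of the closure of `G`, the map `k ↦ k̄` is an injective homomorphism on `K`
(so `K̄` is canonically isomorphic to `K`), and `K̄ ∩ G` is trivial. -/
theorem bar_K_in_closure_grigorchuk :
    (∀ k : Grigorchuk, k ∈ K → bar (k : AutT) ∈ closure (Grigorchuk : Set AutT)) ∧
    (∃ H : Subgroup AutT,
      (H : Set AutT) = {x : AutT | ∃ k : Grigorchuk, k ∈ K ∧ x = bar (k : AutT)} ∧
      (H : Set AutT) ⊆ closure (Grigorchuk : Set AutT)) ∧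
    (∀ k₁ k₂ : Grigorchuk, k₁ ∈ K → k₂ ∈ K →
      bar ((k₁ : AutT) * (k₂ : AutT)) = bar (k₁ : AutT) * bar (k₂ : AutT)) ∧
    (∀ k₁ k₂ : Grigorchuk, k₁ ∈ K → k₂ ∈ K →
      bar (k₁ : AutT) = bar (k₂ : AutT) → k₁ = k₂) ∧
    {x : AutT | ∃ k : Grigorchuk, k ∈ K ∧ x = bar (k : AutT)} ∩ (Grigorchuk : Set AutT)
      = {1} := by
  have hclosure (k : Grigorchuk) (hk : k ∈ K) :
      bar (k : AutT) ∈ closure (Grigorchuk : Set AutT) :=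
    closure_mono KAut_le_grigorchuk (bar_mem_closure_KAut ⟨k, hk, rfl⟩)
  have hcoe : ((KAut.map barHom : Subgroup AutT) : Set AutT) =
      {x : AutT | ∃ k : Grigorchuk, k ∈ K ∧ x = bar (k : AutT)} := by
    ext x
    constructor
    · rintro ⟨_, ⟨k, hk, rfl⟩, rfl⟩
      exact ⟨k, hk, rfl⟩
    · rintro ⟨k, hk, rfl⟩
      exact ⟨k, ⟨k, hk, rfl⟩, rfl⟩
  refine ⟨hclosure, ⟨_, hcoe, ?_⟩, fun _ _ _ _ => bar_mul _ _,
    fun _ _ _ _ h => Subtype.ext (bar_injective h), ?_⟩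
  · rw [hcoe]
    rintro _ ⟨k, hk, rfl⟩
    exact hclosure k hk
  · refine Set.eq_singleton_iff_unique_mem.mpr ⟨⟨⟨1, K.one_mem, bar_one.symm⟩, one_mem _⟩, ?_⟩
    rintro _ ⟨⟨k, -, rfl⟩, hk⟩
    exact bar_eq_one_of_mem_grigorchuk hk
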